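/- For a 3-model, the projections P_{(21)}, P_{(32)}, P_{(31)} satisfy (P_{(32)} + P_{(21)}) P_{(31)} (P_{(32)} + P_{(21)}) = P_{(32)} + P_{(21)} and P_{(31)} (P_{(32)} + P_{(21)}) P_{(31)} = P_{(31)}; hence the restriction P_{(31)}|K_{[31]} : K_{(32)} ∔ K_{(21)} → K_{(31)} is invertible with inverse (P_{(21)} + P_{(32)})|K_{(31)}. -/

import Mathlib

open ContinuousLinearMap

/-- The orthogonal projection onto the closure of a submodule, as an operator `H →L[ℂ] H`. -/
noncomputable def orthProjCl {H : Type*} [NormedAddCommGroup H] [InnerProductSpace ℂ H]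
    [CompleteSpace H] (S : Submodule ℂ H) : H →L[ℂ] H :=
  haveI : CompleteSpace S.topologicalClosure :=
    S.isClosed_topologicalClosure.completeSpace_coe
  S.topologicalClosure.subtypeL ∘L S.topologicalClosure.orthogonalProjectionOnto

section

variable {ι : Type*} [LinearOrder ι]
  {H : Type*} [NormedAddCommGroup H] [InnerProductSpace ℂ H] [CompleteSpace H]
  {E : ι → Type*} [∀ r, NormedAddCommGroup (E r)] [∀ r, InnerProductSpace ℂ (E r)]
  [∀ r, CompleteSpace (E r)]

/-- `q_r = W_r p_r W_r*` -/
noncomputable def qmap (W : ∀ r, E r →L[ℂ] H) (p : ∀ r, E r →L[ℂ] E r) (r : ι) : H →L[ℂ] H :=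
  W r ∘L p r ∘L adjoint (W r)

/-- The model projection `P_{(ij)} = P_{π_i∨…∨π_j}(I − q_{j+})(I − q_{i−})`. -/
noncomputable def Pmodel (W : ∀ r, E r →L[ℂ] H) (pPlus pMinus : ∀ r, E r →L[ℂ] E r)
    (i j : ι) : H →L[ℂ] H :=
  orthProjCl (⨆ r ∈ Set.Icc j i, LinearMap.range (W r : E r →ₗ[ℂ] H)) ∘L
    (1 - qmap W pPlus j) ∘L (1 - qmap W pMinus i)

end

section AuxProj

local notation "⟪" x ", " y "⟫" => @inner ℂ _ _ x y

private theorem tail_rw {α : Type*} [Semigroup α] {x y z : α} (h : x * y = z) (t : α) :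
    x * (y * t) = z * t := by rw [← mul_assoc, h]

variable {H : Type*} [NormedAddCommGroup H] [InnerProductSpace ℂ H] [CompleteSpace H]

private theorem orthProjCl_apply_mem (S : Submodule ℂ H) (x : H) :
    orthProjCl S x ∈ S.topologicalClosure := by
  haveI : CompleteSpace S.topologicalClosure :=
    S.isClosed_topologicalClosure.completeSpace_coe
  simp only [orthProjCl, comp_apply, Submodule.subtypeL_apply]
  exact (S.topologicalClosure.orthogonalProjectionOnto x).2

private theorem orthProjCl_apply_eq_self {S : Submodule ℂ H} {x : H}
    (hx : x ∈ S.topologicalClosure) : orthProjCl S x = x := by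
  haveI : CompleteSpace S.topologicalClosure :=
    S.isClosed_topologicalClosure.completeSpace_coe
  simp only [orthProjCl, comp_apply, Submodule.subtypeL_apply]
  exact Submodule.starProjection_eq_self_iff.mpr hx

private theorem orthProjCl_isSelfAdjoint (S : Submodule ℂ H) : IsSelfAdjoint (orthProjCl S) := by
  haveI : CompleteSpace S.topologicalClosure :=
    S.isClosed_topologicalClosure.completeSpace_coe
  exact isSelfAdjoint_starProjection S.topologicalClosure

omit [CompleteSpace H] in
private theorem inner_zero_on_closure {S : Submodule ℂ H} {v : H}
    (h : ∀ z ∈ S, ⟪v, z⟫ = 0) : ∀ z ∈ S.topologicalClosure, ⟪v, z⟫ = 0 := by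
  have hle : S ≤ LinearMap.ker (innerSL ℂ v : H →ₗ[ℂ] ℂ) := fun z hz => by
    simpa [LinearMap.mem_ker] using h z hz
  have h2 : S.topologicalClosure ≤ LinearMap.ker (innerSL ℂ v : H →ₗ[ℂ] ℂ) :=
    Submodule.topologicalClosure_minimal S hle (ContinuousLinearMap.isClosed_ker (innerSL ℂ v))
  intro z hz
  simpa [LinearMap.mem_ker] using h2 hz

private theorem orthProjCl_eq_of {S : Submodule ℂ H} {x y : H} (hy : y ∈ S.topologicalClosure)
    (h : ∀ z ∈ S, ⟪x - y, z⟫ = 0) : orthProjCl S x = y := by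
  haveI : CompleteSpace S.topologicalClosure :=
    S.isClosed_topologicalClosure.completeSpace_coe
  simp only [orthProjCl, comp_apply, Submodule.subtypeL_apply]
  exact Submodule.eq_starProjection_of_mem_of_inner_eq_zero hy (inner_zero_on_closure h)

end AuxProj

local notation "⟪" x ", " y "⟫" => @inner ℂ _ _ x y

set_option maxHeartbeats 3200000 in
/-- For a 3-model (indices `k ≤ j ≤ i` standing for `1 ≤ 2 ≤ 3`, so
`P_{(32)} = P_{(ij)}`, `P_{(21)} = P_{(jk)}`, `P_{(31)} = P_{(ik)}`), one has
`(P_{(32)} + P_{(21)}) P_{(31)} (P_{(32)} + P_{(21)}) = P_{(32)} + P_{(21)}` and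
`P_{(31)} (P_{(32)} + P_{(21)}) P_{(31)} = P_{(31)}`; hence
`P_{(31)}|K_{[31]} : K_{(32)} ∔ K_{(21)} → K_{(31)}` is invertible with inverse
`(P_{(21)} + P_{(32)})|K_{(31)}`. -/
theorem model_P31_invertible
    {ι : Type*} [LinearOrder ι]
    {H : Type*} [NormedAddCommGroup H] [InnerProductSpace ℂ H] [CompleteSpace H]
    {E : ι → Type*} [∀ r, NormedAddCommGroup (E r)] [∀ r, InnerProductSpace ℂ (E r)]
    [∀ r, CompleteSpace (E r)]
    (W : ∀ r, E r →L[ℂ] H) (pPlus pMinus : ∀ r, E r →L[ℂ] E r)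
    (hiso : ∀ r, ∀ x, ‖W r x‖ = ‖x‖)
    (hsum : ∀ r, pPlus r + pMinus r = 1)
    (hidemP : ∀ r, pPlus r ∘L pPlus r = pPlus r)
    (hidemM : ∀ r, pMinus r ∘L pMinus r = pMinus r)
    (hana : ∀ i j, j ≤ i → pMinus i ∘L (adjoint (W i) ∘L W j) ∘L pPlus j = 0)
    (hmod : ∀ i j k, k ≤ j → j ≤ i →
      adjoint (W i) ∘L W k = (adjoint (W i) ∘L W j) ∘L (adjoint (W j) ∘L W k))
    (i j k : ι) (hji : j ≤ i) (hkj : k ≤ j) :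
    (Pmodel W pPlus pMinus i j + Pmodel W pPlus pMinus j k) ∘L
        Pmodel W pPlus pMinus i k ∘L
        (Pmodel W pPlus pMinus i j + Pmodel W pPlus pMinus j k)
      = Pmodel W pPlus pMinus i j + Pmodel W pPlus pMinus j k
    ∧ Pmodel W pPlus pMinus i k ∘L
        (Pmodel W pPlus pMinus i j + Pmodel W pPlus pMinus j k) ∘L
        Pmodel W pPlus pMinus i k
      = Pmodel W pPlus pMinus i k
    ∧ (∀ x ∈ LinearMap.range (Pmodel W pPlus pMinus i j : H →ₗ[ℂ] H)
          ⊔ LinearMap.range (Pmodel W pPlus pMinus j k : H →ₗ[ℂ] H),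
        (Pmodel W pPlus pMinus i j + Pmodel W pPlus pMinus j k)
          (Pmodel W pPlus pMinus i k x) = x)
    ∧ (∀ y ∈ LinearMap.range (Pmodel W pPlus pMinus i k : H →ₗ[ℂ] H),
        Pmodel W pPlus pMinus i k
          ((Pmodel W pPlus pMinus i j + Pmodel W pPlus pMinus j k) y) = y) := by
  classical
  have hki : k ≤ i := le_trans hkj hji
  -- isometry: W r* W r = 1, pointwise
  have hW1 : ∀ (r : ι) (u : E r), adjoint (W r) (W r u) = u := by
    intro r u
    have hin : ∀ x y : E r, ⟪W r x, W r y⟫ = ⟪x, y⟫ := fun x y =>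
      LinearIsometry.inner_map_map ⟨(W r : E r →ₗ[ℂ] H), hiso r⟩ x y
    apply ext_inner_right ℂ
    intro y
    rw [adjoint_inner_left, hin]
  -- p-algebra
  have hMP : ∀ (r : ι) (u : E r), pMinus r (pPlus r u) = 0 := by
    intro r u
    have h := DFunLike.congr_fun (hana r r le_rfl) u
    simp only [comp_apply, zero_apply] at h
    rwa [hW1] at h
  have hPM : ∀ (r : ι) (u : E r), pPlus r (pMinus r u) = 0 := by
    intro r u
    have h := DFunLike.congr_fun (hsum r) (pMinus r u)
    have h2 := DFunLike.congr_fun (hidemM r) u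
    simp only [comp_apply] at h2
    simp only [add_apply, one_apply_eq_self, h2] at h
    exact (add_eq_right).mp h
  -- membership of ranges in the supremum
  have hmem : ∀ (lo hi r : ι), r ∈ Set.Icc lo hi → ∀ u : E r,
      W r u ∈ (⨆ s ∈ Set.Icc lo hi, LinearMap.range (W s : E s →ₗ[ℂ] H) : Submodule ℂ H).topologicalClosure :=
    fun lo hi r hr u => Submodule.le_topologicalClosure _
      (le_iSup₂ (f := fun s (_ : s ∈ Set.Icc lo hi) => LinearMap.range (W s : E s →ₗ[ℂ] H)) r hr ⟨u, rfl⟩)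
  -- absorption: P_M (W r u) = W r u
  have habs : ∀ (lo hi r : ι), r ∈ Set.Icc lo hi → ∀ u : E r,
      orthProjCl (⨆ s ∈ Set.Icc lo hi, LinearMap.range (W s : E s →ₗ[ℂ] H)) (W r u) = W r u :=
    fun lo hi r hr u => orthProjCl_apply_eq_self (hmem lo hi r hr u)
  have habsO : ∀ (lo hi r : ι), r ∈ Set.Icc lo hi →
      orthProjCl (⨆ s ∈ Set.Icc lo hi, LinearMap.range (W s : E s →ₗ[ℂ] H)) ∘L W r = W r := by
    intro lo hi r hr; ext u; simpa [comp_apply] using habs lo hi r hr u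
  have habs' : ∀ (lo hi r : ι), r ∈ Set.Icc lo hi → ∀ v : H,
      adjoint (W r) (orthProjCl (⨆ s ∈ Set.Icc lo hi, LinearMap.range (W s : E s →ₗ[ℂ] H)) v)
        = adjoint (W r) v := by
    intro lo hi r hr v
    have h := congrArg adjoint (habsO lo hi r hr)
    rw [adjoint_comp, (orthProjCl_isSelfAdjoint _).adjoint_eq] at h
    have := DFunLike.congr_fun h v
    simpa [comp_apply] using this
  -- G2 (low): for r ≤ lo, P_M (W r u) = W lo (W lo* (W r u))
  have hG2low : ∀ (lo hi r : ι), lo ≤ hi → r ≤ lo → ∀ u : E r,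
      orthProjCl (⨆ s ∈ Set.Icc lo hi, LinearMap.range (W s : E s →ₗ[ℂ] H)) (W r u)
        = W lo (adjoint (W lo) (W r u)) := by
    intro lo hi r hlh hrl u
    apply orthProjCl_eq_of (hmem lo hi lo ⟨le_rfl, hlh⟩ _)
    intro z hz
    set v := W r u - W lo (adjoint (W lo) (W r u)) with hv
    have hker : (⨆ s ∈ Set.Icc lo hi, LinearMap.range (W s : E s →ₗ[ℂ] H)) ≤
        LinearMap.ker (innerSL ℂ v : H →ₗ[ℂ] ℂ) := by
      refine iSup₂_le fun t ht => ?_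
      rintro _ ⟨w, rfl⟩
      simp only [LinearMap.mem_ker, ContinuousLinearMap.coe_coe, innerSL_apply_apply]
      rw [← adjoint_inner_left]
      have hm := DFunLike.congr_fun (hmod t lo r hrl ht.1) u
      simp only [comp_apply] at hm
      have h0 : adjoint (W t) v = 0 := by
        rw [hv, map_sub, hm]
        have hm2 := DFunLike.congr_fun (hmod t lo lo le_rfl ht.1) (adjoint (W lo) (W r u))
        simp only [comp_apply] at hm2
        rw [hm2, hW1]
        abel
      rw [h0, inner_zero_left]
    have := hker hz
    simpa [LinearMap.mem_ker] using this
  -- G2 (high): for hi ≤ r, P_M (W r u) = W hi (W hi* (W r u))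
  have hadjflip : ∀ (t b r : ι), t ≤ b → b ≤ r →
      adjoint (W t) ∘L W r = (adjoint (W t) ∘L W b) ∘L (adjoint (W b) ∘L W r) := by
    intro t b r htb hbr
    have h0 := congrArg adjoint (hmod r b t htb hbr)
    simpa only [adjoint_comp, adjoint_adjoint] using h0
  have hG2high : ∀ (lo hi r : ι), lo ≤ hi → hi ≤ r → ∀ u : E r,
      orthProjCl (⨆ s ∈ Set.Icc lo hi, LinearMap.range (W s : E s →ₗ[ℂ] H)) (W r u)
        = W hi (adjoint (W hi) (W r u)) := by
    intro lo hi r hlh hir u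
    apply orthProjCl_eq_of (hmem lo hi hi ⟨hlh, le_rfl⟩ _)
    intro z hz
    set v := W r u - W hi (adjoint (W hi) (W r u)) with hv
    have hker : (⨆ s ∈ Set.Icc lo hi, LinearMap.range (W s : E s →ₗ[ℂ] H)) ≤
        LinearMap.ker (innerSL ℂ v : H →ₗ[ℂ] ℂ) := by
      refine iSup₂_le fun t ht => ?_
      rintro _ ⟨w, rfl⟩
      simp only [LinearMap.mem_ker, ContinuousLinearMap.coe_coe, innerSL_apply_apply]
      rw [← adjoint_inner_left]
      have hm := DFunLike.congr_fun (hadjflip t hi r ht.2 hir) u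
      simp only [comp_apply] at hm
      have h0 : adjoint (W t) v = 0 := by
        rw [hv, map_sub, hm]
        have hm2 := DFunLike.congr_fun (hadjflip t hi hi ht.2 le_rfl)
          (adjoint (W hi) (W r u))
        simp only [comp_apply] at hm2
        rw [hm2, hW1]
        abel
      rw [h0, inner_zero_left]
    have := hker hz
    simpa [LinearMap.mem_ker] using this
  -- extension principle
  have hext : ∀ (lo hi : ι) (A B : H →L[ℂ] H),
      (∀ r, r ∈ Set.Icc lo hi → ∀ u : E r, A (W r u) = B (W r u)) →
      ∀ v : H, A (orthProjCl (⨆ s ∈ Set.Icc lo hi, LinearMap.range (W s : E s →ₗ[ℂ] H)) v)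
        = B (orthProjCl (⨆ s ∈ Set.Icc lo hi, LinearMap.range (W s : E s →ₗ[ℂ] H)) v) := by
    intro lo hi A B hAB v
    have hle : (⨆ s ∈ Set.Icc lo hi, LinearMap.range (W s : E s →ₗ[ℂ] H)) ≤ LinearMap.ker ((A - B : H →L[ℂ] H) : H →ₗ[ℂ] H) :=
      iSup₂_le fun r hr => by
        rintro _ ⟨u, rfl⟩
        simp only [LinearMap.mem_ker, ContinuousLinearMap.coe_coe, ContinuousLinearMap.sub_apply, sub_eq_zero]
        exact hAB r hr u
    have h2 := Submodule.topologicalClosure_minimal _ hle (ContinuousLinearMap.isClosed_ker (A - B))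
      (orthProjCl_apply_mem _ v)
    simpa [LinearMap.mem_ker, ContinuousLinearMap.sub_apply, sub_eq_zero] using h2
  -- atoms
  set R := orthProjCl (⨆ s ∈ Set.Icc j i, LinearMap.range (W s : E s →ₗ[ℂ] H)) with hRdef
  set S := orthProjCl (⨆ s ∈ Set.Icc k j, LinearMap.range (W s : E s →ₗ[ℂ] H)) with hSdef
  set a := qmap W pMinus i with hadef
  set b := qmap W pPlus j with hbdef
  set p := qmap W pMinus j with hpdef
  set c := qmap W pPlus k with hcdef
  -- pointwise `qmap`
  have hq : ∀ (pp : ∀ s, E s →L[ℂ] E s) (r : ι) (x : H),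
      qmap W pp r x = W r (pp r (adjoint (W r) x)) := by
    intro pp r x; simp [qmap, comp_apply]
  -- J pointwise
  have hJg : ∀ (t : ι) (v : H),
      qmap W pPlus t v + qmap W pMinus t v = W t (adjoint (W t) v) := by
    intro t v
    rw [hq, hq, ← map_add]
    have h := DFunLike.congr_fun (hsum t) (adjoint (W t) v)
    simp only [add_apply, one_apply_eq_self] at h
    rw [h]
  -- projection idempotents
  have hRR : R * R = R := by
    ext x; simp only [mul_apply_eq_comp]
    exact orthProjCl_apply_eq_self (orthProjCl_apply_mem _ x)
  have hSS : S * S = S := by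
    ext x; simp only [mul_apply_eq_comp]
    exact orthProjCl_apply_eq_self (orthProjCl_apply_mem _ x)
  -- RS = SR = b + p
  have hRS : R * S = b + p := by
    ext x
    simp only [mul_apply_eq_comp, add_apply, hbdef, hpdef, hRdef, hSdef]
    rw [hJg j x]
    have h1 := hext k j _ (W j ∘L adjoint (W j)) (fun r hr u => by
      simp only [comp_apply]; exact hG2low j i r hji hr.2 u) x
    simp only [comp_apply] at h1
    rw [h1, habs' k j j ⟨hkj, le_rfl⟩ x]
  have hSR : S * R = b + p := by
    ext x
    simp only [mul_apply_eq_comp, add_apply, hbdef, hpdef, hRdef, hSdef]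
    rw [hJg j x]
    have h1 := hext j i _ (W j ∘L adjoint (W j)) (fun r hr u => by
      simp only [comp_apply]; exact hG2high k j r hkj hr.1 u) x
    simp only [comp_apply] at h1
    rw [h1, habs' j i j ⟨le_rfl, hji⟩ x]
  -- absorption of q's by projections
  have hPq : ∀ (lo hi r : ι), r ∈ Set.Icc lo hi → ∀ pp : ∀ s, E s →L[ℂ] E s,
      orthProjCl (⨆ s ∈ Set.Icc lo hi, LinearMap.range (W s : E s →ₗ[ℂ] H)) * qmap W pp r = qmap W pp r := by
    intro lo hi r hr pp
    ext x; simp only [mul_apply_eq_comp, hq]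
    exact habs lo hi r hr _
  have hqP : ∀ (lo hi r : ι), r ∈ Set.Icc lo hi → ∀ pp : ∀ s, E s →L[ℂ] E s,
      qmap W pp r * orthProjCl (⨆ s ∈ Set.Icc lo hi, LinearMap.range (W s : E s →ₗ[ℂ] H)) = qmap W pp r := by
    intro lo hi r hr pp
    ext x; simp only [mul_apply_eq_comp, hq]
    rw [habs' lo hi r hr x]
  have hRa : R * a = a := hPq j i i ⟨hji, le_rfl⟩ pMinus
  have haR : a * R = a := hqP j i i ⟨hji, le_rfl⟩ pMinus
  have hRb : R * b = b := hPq j i j ⟨le_rfl, hji⟩ pPlus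
  have hbR : b * R = b := hqP j i j ⟨le_rfl, hji⟩ pPlus
  have hRp : R * p = p := hPq j i j ⟨le_rfl, hji⟩ pMinus
  have hpR : p * R = p := hqP j i j ⟨le_rfl, hji⟩ pMinus
  have hSb : S * b = b := hPq k j j ⟨hkj, le_rfl⟩ pPlus
  have hbS : b * S = b := hqP k j j ⟨hkj, le_rfl⟩ pPlus
  have hSp : S * p = p := hPq k j j ⟨hkj, le_rfl⟩ pMinus
  have hpS : p * S = p := hqP k j j ⟨hkj, le_rfl⟩ pMinus
  have hSc : S * c = c := hPq k j k ⟨le_rfl, hkj⟩ pPlus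
  have hcS : c * S = c := hqP k j k ⟨le_rfl, hkj⟩ pPlus
  -- adjoint versions of G2
  have hG2highAdj : ∀ (lo hi r : ι), lo ≤ hi → hi ≤ r → ∀ v : H,
      adjoint (W r) (orthProjCl (⨆ s ∈ Set.Icc lo hi, LinearMap.range (W s : E s →ₗ[ℂ] H)) v)
        = adjoint (W r) (W hi (adjoint (W hi) v)) := by
    intro lo hi r hlh hir v
    have hO : orthProjCl (⨆ s ∈ Set.Icc lo hi, LinearMap.range (W s : E s →ₗ[ℂ] H)) ∘L W r
        = W hi ∘L (adjoint (W hi) ∘L W r) := by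
      ext u; simpa [comp_apply] using hG2high lo hi r hlh hir u
    have h := congrArg adjoint hO
    rw [adjoint_comp, adjoint_comp, adjoint_comp, adjoint_adjoint,
      (orthProjCl_isSelfAdjoint _).adjoint_eq] at h
    have := DFunLike.congr_fun h v
    simpa [comp_apply] using this
  have hG2lowAdj : ∀ (lo hi r : ι), lo ≤ hi → r ≤ lo → ∀ v : H,
      adjoint (W r) (orthProjCl (⨆ s ∈ Set.Icc lo hi, LinearMap.range (W s : E s →ₗ[ℂ] H)) v)
        = adjoint (W r) (W lo (adjoint (W lo) v)) := by
    intro lo hi r hlh hrl v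
    have hO : orthProjCl (⨆ s ∈ Set.Icc lo hi, LinearMap.range (W s : E s →ₗ[ℂ] H)) ∘L W r
        = W lo ∘L (adjoint (W lo) ∘L W r) := by
      ext u; simpa [comp_apply] using hG2low lo hi r hlh hrl u
    have h := congrArg adjoint hO
    rw [adjoint_comp, adjoint_comp, adjoint_comp, adjoint_adjoint,
      (orthProjCl_isSelfAdjoint _).adjoint_eq] at h
    have := DFunLike.congr_fun h v
    simpa [comp_apply] using this
  -- G2-composites with q's
  have hSa : S * a = b * a + p * a := by
    ext x
    simp only [mul_apply_eq_comp, add_apply, hbdef, hpdef, hSdef, hadef]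
    rw [hJg j (qmap W pMinus i x), hq]
    exact hG2high k j i hkj hji _
  have haS : a * S = a * b + a * p := by
    ext x
    simp only [mul_apply_eq_comp, add_apply, hbdef, hpdef, hSdef, hadef]
    rw [← map_add, hJg j x, hq, hq]
    rw [hG2highAdj k j i hkj hji x]
  have hRc : R * c = b * c + p * c := by
    ext x
    simp only [mul_apply_eq_comp, add_apply, hbdef, hpdef, hRdef, hcdef]
    rw [hJg j (qmap W pPlus k x), hq]
    exact hG2low j i k hji hkj _
  have hcR : c * R = c * b + c * p := by
    ext x
    simp only [mul_apply_eq_comp, add_apply, hbdef, hpdef, hRdef, hcdef]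
    rw [← map_add, hJg j x, hq, hq]
    rw [hG2lowAdj j i k hji hkj x]
  -- c * a via the model identity
  have hca : c * a = c * (b * a) + c * (p * a) := by
    ext x
    simp only [mul_apply_eq_comp, add_apply, hbdef, hpdef, hcdef, hadef]
    rw [← map_add, hJg j (qmap W pMinus i x)]
    have h2 := DFunLike.congr_fun (hadjflip k j i hkj hji) (pMinus i (adjoint (W i) x))
    simp only [comp_apply] at h2
    simp only [hq]
    rw [h2]
  -- zero products
  have hqq0 : ∀ a' b' : ι, b' ≤ a' → qmap W pMinus a' * qmap W pPlus b' = 0 := by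
    intro a' b' h
    ext x
    simp only [mul_apply_eq_comp, zero_apply, hq]
    have h0 := DFunLike.congr_fun (hana a' b' h) (adjoint (W b') x)
    simp only [comp_apply, zero_apply] at h0
    rw [h0, map_zero]
  have hab : a * b = 0 := hqq0 i j hji
  have hac : a * c = 0 := hqq0 i k hki
  have hpc : p * c = 0 := hqq0 j k hkj
  have hbp : b * p = 0 := by
    ext x
    simp only [mul_apply_eq_comp, zero_apply, hbdef, hpdef, hq]
    rw [hW1, hPM, map_zero]
  have hpb : p * b = 0 := by
    ext x
    simp only [mul_apply_eq_comp, zero_apply, hbdef, hpdef, hq]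
    rw [hW1, hMP, map_zero]
  -- idempotents
  have hqidem : ∀ (pp : ∀ s, E s →L[ℂ] E s), (∀ s, pp s ∘L pp s = pp s) → ∀ r : ι,
      qmap W pp r * qmap W pp r = qmap W pp r := by
    intro pp hid r
    ext x
    simp only [mul_apply_eq_comp, hq]
    rw [hW1]
    have h2 := DFunLike.congr_fun (hid r) (adjoint (W r) x)
    simp only [comp_apply] at h2
    rw [h2]
  have haa : a * a = a := hqidem pMinus hidemM i
  have hbb : b * b = b := hqidem pPlus hidemP j
  have hpp : p * p = p := hqidem pMinus hidemM j
  have hcc : c * c = c := hqidem pPlus hidemP k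
  -- master identity : P_{[k,i]} = R + S - (b + p)
  have hmaster : orthProjCl (⨆ s ∈ Set.Icc k i, LinearMap.range (W s : E s →ₗ[ℂ] H)) = R + S - (b + p) := by
    have hTR : orthProjCl (⨆ s ∈ Set.Icc k i, LinearMap.range (W s : E s →ₗ[ℂ] H)) * R = R := by
      ext x; simp only [mul_apply_eq_comp, hRdef]
      refine orthProjCl_apply_eq_self
        (Submodule.topologicalClosure_mono ?_ (orthProjCl_apply_mem _ x))
      exact iSup₂_le fun r hr =>
        le_iSup₂ (f := fun s (_ : s ∈ Set.Icc k i) => LinearMap.range (W s : E s →ₗ[ℂ] H)) r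
          ⟨le_trans hkj hr.1, hr.2⟩
    have hTS : orthProjCl (⨆ s ∈ Set.Icc k i, LinearMap.range (W s : E s →ₗ[ℂ] H)) * S = S := by
      ext x; simp only [mul_apply_eq_comp, hSdef]
      refine orthProjCl_apply_eq_self
        (Submodule.topologicalClosure_mono ?_ (orthProjCl_apply_mem _ x))
      exact iSup₂_le fun r hr =>
        le_iSup₂ (f := fun s (_ : s ∈ Set.Icc k i) => LinearMap.range (W s : E s →ₗ[ℂ] H)) r
          ⟨hr.1, le_trans hr.2 hji⟩
    have hTJ : orthProjCl (⨆ s ∈ Set.Icc k i, LinearMap.range (W s : E s →ₗ[ℂ] H)) * (b + p) = b + p := by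
      ext x
      simp only [mul_apply_eq_comp, ContinuousLinearMap.add_apply, hbdef, hpdef]
      rw [hJg j x]
      exact habs k i j ⟨hkj, hji⟩ _
    have hRsa : IsSelfAdjoint R := by rw [hRdef]; exact orthProjCl_isSelfAdjoint _
    have hSsa : IsSelfAdjoint S := by rw [hSdef]; exact orthProjCl_isSelfAdjoint _
    have hbpsa : IsSelfAdjoint ((b : H →L[ℂ] H) + p) := by
      have hJ : (b : H →L[ℂ] H) + p = W j ∘L adjoint (W j) := by
        ext v
        simp only [ContinuousLinearMap.add_apply, comp_apply, hbdef, hpdef]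
        exact hJg j v
      rw [hJ, IsSelfAdjoint, ContinuousLinearMap.star_eq_adjoint, adjoint_comp, adjoint_adjoint]
    have hQsa : IsSelfAdjoint (R + S - (b + p)) := (hRsa.add hSsa).sub hbpsa
    have hQT : (R + S - (b + p)) * orthProjCl (⨆ s ∈ Set.Icc k i, LinearMap.range (W s : E s →ₗ[ℂ] H))
        = orthProjCl (⨆ s ∈ Set.Icc k i, LinearMap.range (W s : E s →ₗ[ℂ] H)) := by
      ext v
      simp only [mul_apply_eq_comp]
      have h1 := hext k i (R + S - (b + p)) 1 (fun r hr u => by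
        simp only [ContinuousLinearMap.sub_apply, ContinuousLinearMap.add_apply, one_apply_eq_self,
          hRdef, hSdef, hbdef, hpdef]
        rw [hJg j (W r u)]
        rcases le_total r j with h | h
        · rw [hG2low j i r hji h u, habs k j r ⟨hr.1, h⟩ u]; abel
        · rw [habs j i r ⟨h, hr.2⟩ u, hG2high k j r hkj h u]; abel) v
      simpa using h1
    have h2 : orthProjCl (⨆ s ∈ Set.Icc k i, LinearMap.range (W s : E s →ₗ[ℂ] H)) * (R + S - (b + p))
        = R + S - (b + p) := by
      rw [mul_sub, mul_add, hTR, hTS, hTJ]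
    have h3 := congrArg star hQT
    rw [star_mul, hQsa.star_eq, (orthProjCl_isSelfAdjoint _).star_eq, h2] at h3
    exact h3.symm
  -- canonical product forms
  have cfij : Pmodel W pPlus pMinus i j = R * ((1 - b) * (1 - a)) := rfl
  have cfjk : Pmodel W pPlus pMinus j k = S * ((1 - c) * (1 - p)) := rfl
  have cfik : Pmodel W pPlus pMinus i k = (R + S - (b + p)) * ((1 - c) * (1 - a)) := by
    rw [show Pmodel W pPlus pMinus i k
        = orthProjCl (⨆ s ∈ Set.Icc k i, LinearMap.range (W s : E s →ₗ[ℂ] H)) * ((1 - c) * (1 - a)) from rfl,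
      hmaster]
  have hcm : ∀ A B : H →L[ℂ] H, A ∘L B = A * B := fun _ _ => rfl
  -- the two main operator identities
  have hT1 : (Pmodel W pPlus pMinus i j + Pmodel W pPlus pMinus j k) ∘L
      Pmodel W pPlus pMinus i k ∘L
      (Pmodel W pPlus pMinus i j + Pmodel W pPlus pMinus j k)
      = Pmodel W pPlus pMinus i j + Pmodel W pPlus pMinus j k := by
    simp only [hcm]
    rw [cfij, cfjk, cfik]
    simp only [mul_add, add_mul, mul_sub, sub_mul, mul_one, one_mul, mul_assoc,
      hRR, hSS, hRS, hSR, hRa, haR, hRb, hbR, hRp, hpR, hSb, hbS, hSp, hpS, hSc, hcS,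
      hSa, haS, hRc, hcR, hca, haa, hbb, hpp, hcc, hab, hac, hpc, hbp, hpb,
      tail_rw hRR, tail_rw hSS, tail_rw hRS, tail_rw hSR, tail_rw hRa, tail_rw haR,
      tail_rw hRb, tail_rw hbR, tail_rw hRp, tail_rw hpR, tail_rw hSb, tail_rw hbS,
      tail_rw hSp, tail_rw hpS, tail_rw hSc, tail_rw hcS, tail_rw hSa, tail_rw haS,
      tail_rw hRc, tail_rw hcR, tail_rw hca, tail_rw haa, tail_rw hbb, tail_rw hpp,
      tail_rw hcc, tail_rw hab, tail_rw hac, tail_rw hpc, tail_rw hbp, tail_rw hpb,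
      zero_mul, mul_zero, add_zero, zero_add, sub_zero, zero_sub]
    abel
  have hT2 : Pmodel W pPlus pMinus i k ∘L
      (Pmodel W pPlus pMinus i j + Pmodel W pPlus pMinus j k) ∘L
      Pmodel W pPlus pMinus i k = Pmodel W pPlus pMinus i k := by
    simp only [hcm]
    rw [cfij, cfjk, cfik]
    simp only [mul_add, add_mul, mul_sub, sub_mul, mul_one, one_mul, mul_assoc,
      hRR, hSS, hRS, hSR, hRa, haR, hRb, hbR, hRp, hpR, hSb, hbS, hSp, hpS, hSc, hcS,
      hSa, haS, hRc, hcR, hca, haa, hbb, hpp, hcc, hab, hac, hpc, hbp, hpb,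
      tail_rw hRR, tail_rw hSS, tail_rw hRS, tail_rw hSR, tail_rw hRa, tail_rw haR,
      tail_rw hRb, tail_rw hbR, tail_rw hRp, tail_rw hpR, tail_rw hSb, tail_rw hbS,
      tail_rw hSp, tail_rw hpS, tail_rw hSc, tail_rw hcS, tail_rw hSa, tail_rw haS,
      tail_rw hRc, tail_rw hcR, tail_rw hca, tail_rw haa, tail_rw hbb, tail_rw hpp,
      tail_rw hcc, tail_rw hab, tail_rw hac, tail_rw hpc, tail_rw hbp, tail_rw hpb,
      zero_mul, mul_zero, add_zero, zero_add, sub_zero, zero_sub]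
    abel
  have hXij : (Pmodel W pPlus pMinus i j + Pmodel W pPlus pMinus j k) *
      Pmodel W pPlus pMinus i j = Pmodel W pPlus pMinus i j := by
    rw [cfij, cfjk]
    simp only [mul_add, add_mul, mul_sub, sub_mul, mul_one, one_mul, mul_assoc,
      hRR, hSS, hRS, hSR, hRa, haR, hRb, hbR, hRp, hpR, hSb, hbS, hSp, hpS, hSc, hcS,
      hSa, haS, hRc, hcR, hca, haa, hbb, hpp, hcc, hab, hac, hpc, hbp, hpb,
      tail_rw hRR, tail_rw hSS, tail_rw hRS, tail_rw hSR, tail_rw hRa, tail_rw haR,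
      tail_rw hRb, tail_rw hbR, tail_rw hRp, tail_rw hpR, tail_rw hSb, tail_rw hbS,
      tail_rw hSp, tail_rw hpS, tail_rw hSc, tail_rw hcS, tail_rw hSa, tail_rw haS,
      tail_rw hRc, tail_rw hcR, tail_rw hca, tail_rw haa, tail_rw hbb, tail_rw hpp,
      tail_rw hcc, tail_rw hab, tail_rw hac, tail_rw hpc, tail_rw hbp, tail_rw hpb,
      zero_mul, mul_zero, add_zero, zero_add, sub_zero, zero_sub]
    abel
  have hXjk : (Pmodel W pPlus pMinus i j + Pmodel W pPlus pMinus j k) *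
      Pmodel W pPlus pMinus j k = Pmodel W pPlus pMinus j k := by
    rw [cfij, cfjk]
    simp only [mul_add, add_mul, mul_sub, sub_mul, mul_one, one_mul, mul_assoc,
      hRR, hSS, hRS, hSR, hRa, haR, hRb, hbR, hRp, hpR, hSb, hbS, hSp, hpS, hSc, hcS,
      hSa, haS, hRc, hcR, hca, haa, hbb, hpp, hcc, hab, hac, hpc, hbp, hpb,
      tail_rw hRR, tail_rw hSS, tail_rw hRS, tail_rw hSR, tail_rw hRa, tail_rw haR,
      tail_rw hRb, tail_rw hbR, tail_rw hRp, tail_rw hpR, tail_rw hSb, tail_rw hbS,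
      tail_rw hSp, tail_rw hpS, tail_rw hSc, tail_rw hcS, tail_rw hSa, tail_rw haS,
      tail_rw hRc, tail_rw hcR, tail_rw hca, tail_rw haa, tail_rw hbb, tail_rw hpp,
      tail_rw hcc, tail_rw hab, tail_rw hac, tail_rw hpc, tail_rw hbp, tail_rw hpb,
      zero_mul, mul_zero, add_zero, zero_add, sub_zero, zero_sub]
    abel
  refine ⟨hT1, hT2, ?_, ?_⟩
  · rintro x hx
    rw [Submodule.mem_sup] at hx
    obtain ⟨u, hu, v, hv, rfl⟩ := hx
    obtain ⟨u', rfl⟩ := hu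
    obtain ⟨v', rfl⟩ := hv
    have h1 := DFunLike.congr_fun hXij u'
    have h2 := DFunLike.congr_fun hXjk v'
    simp only [mul_apply_eq_comp] at h1 h2
    have hw : (Pmodel W pPlus pMinus i j + Pmodel W pPlus pMinus j k)
        (Pmodel W pPlus pMinus i j u' + Pmodel W pPlus pMinus j k v')
        = Pmodel W pPlus pMinus i j u' + Pmodel W pPlus pMinus j k v' := by
      rw [map_add, h1, h2]
    have h3 := DFunLike.congr_fun hT1
      (Pmodel W pPlus pMinus i j u' + Pmodel W pPlus pMinus j k v')
    simp only [comp_apply] at h3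
    rw [hw] at h3
    exact h3
  · rintro y ⟨y₀, rfl⟩
    have h4 := DFunLike.congr_fun hT2 y₀
    simp only [comp_apply] at h4
    exact h4
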